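/- arXiv:2412.14975 — 2 statements merged into one kernel-verified Lean document; each statement's English description precedes it below -/
import Mathlib

section
/- Let x = y_1 y_2 ⋯ y_c be a segmentation of a string into c ≥ 1 nonempty chunks. Define PLAS_1 = {δ^B({q0}, y_1)} (when defined, else ∅), and for 2 ≤ i ≤ c, PIS_i = { {q} : q ∈ Q_N, δ^B({q}, y_i) is defined }, φ(PLAS) = ⋃_{p ∈ PLAS} { {q} : q ∈ p }, and PLAS_i = { δ^B(s, y_i) : s ∈ φ(PLAS_{i−1}) ∩ PIS_i }. Then for all 1 ≤ i ≤ c, the union ⋃_{p ∈ PLAS_i} p equals ρ*(q0, y_1 ⋯ y_i). -/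
/-- One-step determinized (subset) transition of an NFA: `δ^B(S,a) = ⋃_{q∈S} ρ(q,a)`.
    The empty set plays the role of "undefined". -/
def dTrans {Q σ : Type*} (ρ : Q → σ → Set Q) (S : Set Q) (a : σ) : Set Q :=
  ⋃ q ∈ S, ρ q a

/-- Determinized transition extended to strings: `δ^B*(S,x)`. -/
def dRun {Q σ : Type*} (ρ : Q → σ → Set Q) (S : Set Q) (x : List σ) : Set Q :=
  x.foldl (dTrans ρ) S

/-- NFA transition relation extended to strings, by recursion on the string: `ρ*(q,x)`. -/
def nRun {Q σ : Type*} (ρ : Q → σ → Set Q) : Q → List σ → Set Q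
  | q, [] => {q}
  | q, a :: x => ⋃ q' ∈ ρ q a, nRun ρ q' x

/-- The interface function `φ`: maps a set of subset-states to the set of
    singletons of their member NFA states. -/
def phi {Q : Type*} (P : Set (Set Q)) : Set (Set Q) :=
  ⋃ p ∈ P, {s | ∃ q ∈ p, s = {q}}

/-- One chunk-processing step of the RID join computation:
    `PLAS_i = { δ^B(s, y_i) : s ∈ φ(PLAS_{i-1}) ∩ PIS_i }`,
    where `PIS_i` keeps exactly the singletons on which the run is defined. -/
def riStep {Q σ : Type*} (ρ : Q → σ → Set Q) (P : Set (Set Q)) (y : List σ) : Set (Set Q) :=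
  (fun s => dRun ρ s y) '' {s ∈ phi P | dRun ρ s y ≠ ∅}

/-- The sets `PLAS_i` computed chunk by chunk; `plas ρ q0 [y_1, …, y_c] = PLAS_c`.
    (Note `phi {{q0}} = {{q0}}`, so the first step is `PLAS_1 = {δ^B({q0},y_1)}` when defined.) -/
def plas {Q σ : Type*} (ρ : Q → σ → Set Q) (q0 : Q) (ys : List (List σ)) : Set (Set Q) :=
  ys.foldl (riStep ρ) {{q0}}

lemma dRun_eq {Q σ : Type*} (ρ : Q → σ → Set Q) (y : List σ) (S : Set Q) :
    dRun ρ S y = ⋃ q ∈ S, nRun ρ q y := by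
  induction y generalizing S with
  | nil => simp [dRun, nRun]
  | cons a y ih =>
    show dRun ρ (dTrans ρ S a) y = _
    rw [ih]
    ext x
    simp [dTrans, nRun]

lemma nRun_append {Q σ : Type*} (ρ : Q → σ → Set Q) (x z : List σ) (q : Q) :
    nRun ρ q (x ++ z) = ⋃ q' ∈ nRun ρ q x, nRun ρ q' z := by
  induction x generalizing q with
  | nil => simp [nRun]
  | cons a x ih =>
    show (⋃ q' ∈ ρ q a, nRun ρ q' (x ++ z)) = _
    ext w
    simp only [nRun, Set.mem_iUnion, ih]
    aesop

lemma mem_sUnion_riStep {Q σ : Type*} (ρ : Q → σ → Set Q) (P : Set (Set Q)) (y : List σ)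
    (x : Q) : x ∈ ⋃₀ riStep ρ P y ↔ ∃ q ∈ ⋃₀ P, x ∈ nRun ρ q y := by
  simp only [riStep, phi, Set.sUnion_image, Set.mem_iUnion, Set.mem_sep_iff,
    Set.mem_setOf_eq, Set.mem_sUnion, exists_prop]
  constructor
  · rintro ⟨s, ⟨⟨p, hp, q, hq, rfl⟩, -⟩, hx⟩
    rw [dRun_eq] at hx
    simp only [Set.mem_iUnion, Set.mem_singleton_iff, exists_prop] at hx
    obtain ⟨q', hq', h⟩ := hx
    subst hq'
    exact ⟨q', ⟨p, hp, hq⟩, h⟩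
  · rintro ⟨q, ⟨p, hp, hq⟩, hx⟩
    have hmem : x ∈ dRun ρ {q} y := by
      rw [dRun_eq]; simp only [Set.mem_iUnion, Set.mem_singleton_iff, exists_prop]
      exact ⟨q, rfl, hx⟩
    refine ⟨{q}, ⟨⟨p, hp, q, hq, rfl⟩, ?_⟩, hmem⟩
    intro h; rw [h] at hmem; exact hmem

lemma mem_foldl_riStep {Q σ : Type*} (ρ : Q → σ → Set Q) (ys : List (List σ))
    (P : Set (Set Q)) (x : Q) :
    x ∈ ⋃₀ (ys.foldl (riStep ρ) P) ↔ ∃ q ∈ ⋃₀ P, x ∈ nRun ρ q ys.flatten := by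
  induction ys generalizing P with
  | nil => simp [nRun]
  | cons y ys ih =>
    show x ∈ ⋃₀ (ys.foldl (riStep ρ) (riStep ρ P y)) ↔ _
    rw [ih]
    simp only [List.flatten_cons, nRun_append, Set.mem_iUnion, exists_prop]
    constructor
    · rintro ⟨q, hq, hx⟩
      rw [mem_sUnion_riStep] at hq
      obtain ⟨p, hp, hq⟩ := hq
      exact ⟨p, hp, q, hq, hx⟩
    · rintro ⟨p, hp, q, hq, hx⟩
      refine ⟨q, ?_, hx⟩
      rw [mem_sUnion_riStep]
      exact ⟨p, hp, hq⟩

/-- Lemma 1: for a segmentation into `c ≥ 1` nonempty chunks and every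
    `1 ≤ i ≤ c`, the union of the elements of `PLAS_i` equals `ρ*(q0, y_1 ⋯ y_i)`. -/
theorem union_plas_eq_nRun {Q σ : Type*} (ρ : Q → σ → Set Q) (q0 : Q)
    (ys : List (List σ)) (hc : 1 ≤ ys.length) (hy : ∀ y ∈ ys, y ≠ [])
    (i : ℕ) (h1 : 1 ≤ i) (h2 : i ≤ ys.length) :
    ⋃₀ plas ρ q0 (ys.take i) = nRun ρ q0 (ys.take i).flatten := by
  ext x
  simp only [plas]
  rw [mem_foldl_riStep]
  simp
end

section
/- With PLAS_c defined as in the chunked RI-DFA reach-and-join computation on segmentation x = y_1⋯y_c, and F^RID = { p ∈ P : p ∩ F ≠ ∅ }, the acceptance condition PLAS_c ∩ F^RID ≠ ∅ holds if and only if ρ*(q0, y_1⋯y_c) ∩ F ≠ ∅, i.e., the parallel device accepts x exactly when the NFA N accepts x. -/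
lemma dRun_cons {Q σ : Type*} (ρ : Q → σ → Set Q) (S : Set Q) (a : σ) (x : List σ) :
    dRun ρ S (a :: x) = dRun ρ (dTrans ρ S a) x := rfl

lemma dTrans_singleton {Q σ : Type*} (ρ : Q → σ → Set Q) (q : Q) (a : σ) :
    dTrans ρ {q} a = ρ q a := by simp [dTrans]

lemma dRun_eq_biUnion {Q σ : Type*} (ρ : Q → σ → Set Q) (S : Set Q) (y : List σ) :
    dRun ρ S y = ⋃ q ∈ S, dRun ρ {q} y := by
  induction y generalizing S with
  | nil => simp [dRun]
  | cons a y ih =>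
    have h : ∀ q : Q, dRun ρ ({q} : Set Q) (a :: y) = ⋃ q' ∈ ρ q a, dRun ρ {q'} y := by
      intro q
      rw [dRun_cons, dTrans_singleton, ih]
    ext x
    rw [dRun_cons, ih]
    simp only [Set.mem_iUnion, dTrans, h]
    clear ih
    aesop

lemma nRun_eq_dRun {Q σ : Type*} (ρ : Q → σ → Set Q) (q : Q) (x : List σ) :
    nRun ρ q x = dRun ρ {q} x := by
  induction x generalizing q with
  | nil => simp [nRun, dRun]
  | cons a x ih =>
    rw [dRun_cons, dRun_eq_biUnion]
    simp only [nRun, ih]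
    ext q'
    simp [dTrans]

lemma sUnion_riStep {Q σ : Type*} (ρ : Q → σ → Set Q) (P : Set (Set Q)) (y : List σ) :
    ⋃₀ riStep ρ P y = dRun ρ (⋃₀ P) y := by
  rw [dRun_eq_biUnion]
  ext x
  simp only [riStep, Set.sUnion_image, Set.mem_iUnion, Set.mem_setOf_eq, Set.mem_sep_iff]
  constructor
  · rintro ⟨s, ⟨hs, -⟩, hx⟩
    simp only [phi, Set.mem_iUnion, Set.mem_setOf_eq] at hs
    obtain ⟨p, hp, q, hq, rfl⟩ := hs
    exact ⟨q, ⟨p, hp, hq⟩, hx⟩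
  · rintro ⟨q, ⟨p, hp, hq⟩, hx⟩
    refine ⟨{q}, ⟨?_, ?_⟩, hx⟩
    · simp only [phi, Set.mem_iUnion, Set.mem_setOf_eq]
      exact ⟨p, hp, q, hq, rfl⟩
    · exact Set.nonempty_iff_ne_empty.1 ⟨x, hx⟩

lemma sUnion_foldl {Q σ : Type*} (ρ : Q → σ → Set Q) (ys : List (List σ)) (P : Set (Set Q)) :
    ⋃₀ (ys.foldl (riStep ρ) P) = dRun ρ (⋃₀ P) ys.flatten := by
  induction ys generalizing P with
  | nil => simp [dRun]
  | cons y ys ih =>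
    simp only [List.foldl_cons, List.flatten_cons, dRun, List.foldl_append]
    rw [ih, sUnion_riStep]
    rfl

/-- Lemma 2: with `F^RID = { p ∈ P : p ∩ F ≠ ∅ }`, the acceptance condition
    `PLAS_c ∩ F^RID ≠ ∅` holds iff `ρ*(q0, y_1⋯y_c) ∩ F ≠ ∅`, i.e. the parallel device
    accepts exactly when the NFA accepts. -/
theorem rid_acceptance {Q σ : Type*} (ρ : Q → σ → Set Q) (q0 : Q) (F : Set Q)
    (ys : List (List σ)) (hc : 1 ≤ ys.length) (hy : ∀ y ∈ ys, y ≠ []) :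
    (plas ρ q0 ys ∩ {p | (p ∩ F).Nonempty}).Nonempty ↔
      (nRun ρ q0 ys.flatten ∩ F).Nonempty := by
  have key : ⋃₀ plas ρ q0 ys = nRun ρ q0 ys.flatten := by
    rw [nRun_eq_dRun, plas, sUnion_foldl]
    simp
  constructor
  · rintro ⟨p, hp, x, hxp, hxF⟩
    exact ⟨x, key ▸ Set.mem_sUnion.2 ⟨p, hp, hxp⟩, hxF⟩
  · rintro ⟨x, hx, hxF⟩
    rw [← key] at hx
    obtain ⟨p, hp, hxp⟩ := hx
    exact ⟨p, hp, x, hxp, hxF⟩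
end
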